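/- Let n ≥ 1, let V = ℂ^{2n+1} with standard basis e_1, …, e_{2n+1}, fix a vector a ∈ V, an index i ∈ {1,…,2n+1}, and vectors p_j ∈ V for each j ≠ i. Then the set ℛ_e = {v ∈ V : a ∧ (v ∧ e_i + Σ_{j≠i} p_j ∧ e_j)^n ≠ 0 in Λ(V)} is either empty, or it is path-connected and its real convex hull equals all of V: convexHull ℝ ℛ_e = V. -/
import Mathlib


open ExteriorAlgebra

/-- `(X + C)^(m+1) = C^(m+1) + (m+1) • (X * C^m)` when `X` squares to zero and commutes
with `C`. -/
lemma pow_add_of_sq_zero {A : Type*} [Ring A] (X C : A) (h : Commute X C)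
    (hX : X * X = 0) : ∀ m : ℕ, (X + C) ^ (m + 1) = C ^ (m + 1) + (m + 1) • (X * C ^ m) := by
  intro m
  induction m with
  | zero => simp [add_comm]
  | succ m ih =>
    have hc : C ^ (m + 1) * X = X * C ^ (m + 1) := ((h.pow_right (m + 1)).eq).symm
    have hc' : C ^ m * X = X * C ^ m := ((h.pow_right m).eq).symm
    calc (X + C) ^ (m + 1 + 1) = (X + C) ^ (m + 1) * (X + C) := by rw [pow_succ]
      _ = (C ^ (m + 1) + (m + 1) • (X * C ^ m)) * (X + C) := by rw [ih]
      _ = C ^ (m + 1) * X + C ^ (m + 1) * C + ((m + 1) • (X * (C ^ m * X))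
            + (m + 1) • (X * C ^ m * C)) := by
          simp only [add_mul, mul_add, smul_mul_assoc, mul_assoc]
          abel
      _ = X * C ^ (m + 1) + C ^ (m + 2) + ((m + 1) • (X * (X * C ^ m))
            + (m + 1) • (X * C ^ (m + 1))) := by
          rw [hc, hc']
          simp only [mul_assoc, ← pow_succ]
      _ = C ^ (m + 2) + (m + 1 + 1) • (X * C ^ (m + 1)) := by
          rw [← mul_assoc X X, hX, zero_mul, smul_zero, zero_add]
          simp only [nsmul_eq_mul]
          push_cast
          noncomm_ring

/-- Products of two `ι`'s anticommute pairwise in the exterior algebra. -/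
lemma iota_pair_commute {R M : Type*} [CommRing R] [AddCommGroup M] [Module R M]
    (x y z w : M) :
    Commute (ι R x * ι R y) (ι R z * ι R w) := by
  have sw : ∀ u v : M, ι R u * ι R v = -(ι R v * ι R u) := fun u v =>
    eq_neg_of_add_eq_zero_left (ι_add_mul_swap u v)
  show _ = _
  calc ι R x * ι R y * (ι R z * ι R w)
      = ι R x * (ι R y * ι R z) * ι R w := by noncomm_ring
    _ = ι R x * (-(ι R z * ι R y)) * ι R w := by rw [sw y z]
    _ = -((ι R x * ι R z) * (ι R y * ι R w)) := by noncomm_ring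
    _ = -((-(ι R z * ι R x)) * (-(ι R w * ι R y))) := by rw [sw x z, sw y w]
    _ = -(ι R z * (ι R x * ι R w) * ι R y) := by noncomm_ring
    _ = -(ι R z * (-(ι R w * ι R x)) * ι R y) := by rw [sw x w]
    _ = ι R z * ι R w * (ι R x * ι R y) := by noncomm_ring

/-- A product of two `ι`'s squares to zero. -/
lemma iota_pair_sq_zero {R M : Type*} [CommRing R] [AddCommGroup M] [Module R M]
    (x y : M) : (ι R x * ι R y) * (ι R x * ι R y) = 0 := by
  have sw : ι R y * ι R x = -(ι R x * ι R y) :=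
    eq_neg_of_add_eq_zero_left (ι_add_mul_swap y x)
  calc ι R x * ι R y * (ι R x * ι R y)
      = ι R x * (ι R y * ι R x) * ι R y := by noncomm_ring
    _ = ι R x * (-(ι R x * ι R y)) * ι R y := by rw [sw]
    _ = -((ι R x * ι R x) * (ι R y * ι R y)) := by noncomm_ring
    _ = 0 := by rw [ι_sq_zero]; simp

/-- The nonvanishing set of an affine map from `ℂ^m` to a complex vector space is
either empty, or path-connected with full real convex hull. -/
lemma affine_nonvanishing_ample {F : Type*} [AddCommGroup F] [Module ℂ F]
    (m : ℕ) (L : (Fin m → ℂ) →ₗ[ℂ] F) (b : F) :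
    {v | L v + b ≠ 0} = ∅ ∨
      (IsPathConnected {v | L v + b ≠ 0} ∧ convexHull ℝ {v | L v + b ≠ 0} = Set.univ) := by
  set S : Set (Fin m → ℂ) := {v | L v + b ≠ 0} with hS
  by_cases hne : S = ∅
  · exact Or.inl hne
  right
  obtain ⟨u, hu⟩ : S.Nonempty := Set.nonempty_iff_ne_empty.2 hne
  have hu' : L u + b ≠ 0 := hu
  constructor
  · -- path-connectedness
    refine ⟨u, hu, ?_⟩
    intro v hv
    have hv' : L v + b ≠ 0 := hv
    set bad : Set ℂ := {z : ℂ | (L u + b) + z • L (v - u) = 0} with hbad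
    have hcount : bad.Countable := by
      have hsub : bad.Subsingleton := by
        intro z₁ hz₁ z₂ hz₂
        have hw : L (v - u) ≠ 0 := by
          intro h0
          apply hu'
          have := hz₁
          simp only [hbad, Set.mem_setOf_eq, h0, smul_zero, add_zero] at this
          exact this
        have h12 : z₁ • L (v - u) = z₂ • L (v - u) := by
          have e1 : (L u + b) + z₁ • L (v - u) = 0 := hz₁
          have e2 : (L u + b) + z₂ • L (v - u) = 0 := hz₂
          have := e1.trans e2.symm
          exact add_left_cancel this
        have : (z₁ - z₂) • L (v - u) = 0 := by rw [sub_smul, h12, sub_self]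
        rcases smul_eq_zero.1 this with h | h
        · exact sub_eq_zero.1 h
        · exact absurd h hw
      exact hsub.countable
    have hrank : 1 < Module.rank ℝ ℂ := by
      rw [Complex.rank_real_complex]; norm_num
    have hpc : IsPathConnected badᶜ := hcount.isPathConnected_compl_of_one_lt_rank hrank
    have h0 : (0 : ℂ) ∈ badᶜ := by
      simp only [hbad, Set.mem_compl_iff, Set.mem_setOf_eq, zero_smul, add_zero]
      exact hu'
    have h1 : (1 : ℂ) ∈ badᶜ := by
      simp only [hbad, Set.mem_compl_iff, Set.mem_setOf_eq, one_smul, map_sub]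
      intro h
      apply hv'
      calc L v + b = L u + b + (L v - L u) := by abel
        _ = 0 := h
    obtain ⟨γ, hγ⟩ := hpc.joinedIn 0 h0 1 h1
    -- transport along the affine path `z ↦ u + z • (v - u)`
    set φ : ℂ → (Fin m → ℂ) := fun z => u + z • (v - u) with hφ
    have hφc : Continuous φ := by
      apply continuous_const.add
      exact continuous_id.smul continuous_const
    have hφ0 : φ 0 = u := by simp [hφ]
    have hφ1 : φ 1 = v := by simp [hφ]
    have hmaps : ∀ z : ℂ, z ∈ badᶜ → φ z ∈ S := by
      intro z hz
      have hz' : (L u + b) + z • L (v - u) ≠ 0 := hz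
      show L (φ z) + b ≠ 0
      have e : L (φ z) + b = (L u + b) + z • L (v - u) := by
        simp only [hφ, map_add, map_smul]
        abel
      rw [e]; exact hz'
    have : JoinedIn S (φ 0) (φ 1) :=
      ⟨γ.map hφc, fun t => hmaps (γ t) (hγ t)⟩
    rwa [hφ0, hφ1] at this
  · -- full convex hull
    apply Set.eq_univ_of_forall
    intro x
    by_cases hx : x ∈ S
    · exact subset_convexHull ℝ S hx
    · have hx0 : L x + b = 0 := by
        by_contra h
        exact hx h
      set w : Fin m → ℂ := u - x with hw
      have hLw : L w ≠ 0 := by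
        intro h
        apply hu'
        have h' : L u - L x = 0 := by rw [← map_sub]; exact h
        rw [sub_eq_zero.1 h', hx0]
      have h1 : x + w ∈ S := by
        show L (x + w) + b ≠ 0
        have e : L (x + w) + b = L w := by
          rw [map_add, show L x + L w + b = L w + (L x + b) from by abel, hx0, add_zero]
        rw [e]; exact hLw
      have h2 : x - w ∈ S := by
        show L (x - w) + b ≠ 0
        have e : L (x - w) + b = -(L w) := by
          rw [map_sub, show L x - L w + b = -(L w) + (L x + b) from by abel, hx0, add_zero]
        rw [e]; exact neg_ne_zero.2 hLw
      have hmid : x ∈ segment ℝ (x + w) (x - w) := mem_segment_add_sub x w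
      exact (convex_convexHull ℝ S).segment_subset (subset_convexHull ℝ S h1)
        (subset_convexHull ℝ S h2) hmid

/-- Affinity of the contact expression in `v`. -/
lemma contact_affine {M ι' : Type*} [AddCommGroup M] [Module ℂ M] [DecidableEq ι']
    (a e : M) (s : Finset ι') (f g : ι' → M) (m : ℕ) (v : M) :
    ι ℂ a * (ι ℂ v * ι ℂ e + ∑ j ∈ s, ι ℂ (f j) * ι ℂ (g j)) ^ (m + 1)
      = (m + 1) • (ι ℂ a * (ι ℂ v * ι ℂ e * (∑ j ∈ s, ι ℂ (f j) * ι ℂ (g j)) ^ m))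
        + ι ℂ a * (∑ j ∈ s, ι ℂ (f j) * ι ℂ (g j)) ^ (m + 1) := by
  have hcomm : Commute (ι ℂ v * ι ℂ e) (∑ j ∈ s, ι ℂ (f j) * ι ℂ (g j)) :=
    Commute.sum_right _ _ _ fun j _ => iota_pair_commute v e (f j) (g j)
  have hsq : (ι ℂ v * ι ℂ e) * (ι ℂ v * ι ℂ e) = 0 := iota_pair_sq_zero _ _
  rw [pow_add_of_sq_zero _ _ hcomm hsq m, mul_add, mul_smul_comm, add_comm, mul_assoc]

/-- Ampleness of the complex contact relation in the coordinate directions (Lemma 2.2):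
the set of vectors `v` with `a ∧ (v ∧ e_i + Σ_{j≠i} p_j ∧ e_j)^n ≠ 0` in the exterior
algebra of `ℂ^{2n+1}` is either empty, or path-connected with full real convex hull. -/
theorem contact_relation_ample_in_coordinate_directions
    (n : ℕ) (hn : 1 ≤ n)
    (a : Fin (2 * n + 1) → ℂ) (i : Fin (2 * n + 1))
    (p : Fin (2 * n + 1) → (Fin (2 * n + 1) → ℂ))
    (R : Set (Fin (2 * n + 1) → ℂ))
    (hR : R = {v | ExteriorAlgebra.ι ℂ a *
        (ExteriorAlgebra.ι ℂ v * ExteriorAlgebra.ι ℂ (Pi.single i 1) +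
          ∑ j ∈ Finset.univ.erase i,
            ExteriorAlgebra.ι ℂ (p j) * ExteriorAlgebra.ι ℂ (Pi.single j 1)) ^ n ≠ 0}) :
    R = ∅ ∨ (IsPathConnected R ∧ convexHull ℝ R = Set.univ) := by
  classical
  obtain ⟨m, rfl⟩ : ∃ m, n = m + 1 := ⟨n - 1, (Nat.succ_pred_eq_of_pos hn).symm⟩
  set Cc : ExteriorAlgebra ℂ (Fin (2 * (m + 1) + 1) → ℂ) :=
    ∑ j ∈ Finset.univ.erase i, ι ℂ (p j) * ι ℂ (Pi.single j 1) with hCc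
  set L : (Fin (2 * (m + 1) + 1) → ℂ) →ₗ[ℂ] ExteriorAlgebra ℂ (Fin (2 * (m + 1) + 1) → ℂ) :=
    (m + 1) • ((LinearMap.mulLeft ℂ (ι ℂ a)).comp
      (((LinearMap.mulRight ℂ (Cc ^ m)).comp
        ((LinearMap.mulRight ℂ (ι ℂ (Pi.single i 1))).comp
          (ι ℂ : (Fin (2 * (m + 1) + 1) → ℂ) →ₗ[ℂ] _))))) with hL
  have hLv : ∀ v, L v = (m + 1) • (ι ℂ a * (ι ℂ v * ι ℂ (Pi.single i 1) * Cc ^ m)) := by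
    intro v
    simp only [hL, LinearMap.smul_apply, LinearMap.comp_apply, LinearMap.mulLeft_apply,
      LinearMap.mulRight_apply]
  have hR' : R = {v | L v + ι ℂ a * Cc ^ (m + 1) ≠ 0} := by
    rw [hR]
    ext v
    simp only [Set.mem_setOf_eq]
    rw [contact_affine a (Pi.single i 1) (Finset.univ.erase i) p (fun j => Pi.single j 1) m v,
      ← hLv v]
  rw [hR']
  exact affine_nonvanishing_ample (2 * (m + 1) + 1) L (ι ℂ a * Cc ^ (m + 1))
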